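/- arXiv:1404.3530 — 4 statements merged into one kernel-verified Lean document; each statement's English description precedes it below -/
import Mathlib

section
/- Let m ≥ 2 be an integer and let p, q be positive integers with q > 0, and set r = p - q. Suppose that p(p+1)⋯(p+m-1) = r(r+1)⋯(r+m-1). Then m is even and q = 2p + m - 1. -/
/-!
If `r = p - q < 0` is so negative that `r, r + 1, …, r + m - 1` are all negative, then
reflecting the factors gives `r (r + 1) ⋯ (r + m - 1) = (-1)^m s (s + 1) ⋯ (s + m - 1)` with
`s = 1 - m - r > 0`. Positivity of both rising products forces `m` even, and injectivity of
`a ↦ a (a + 1) ⋯ (a + m - 1)` on `a ≥ 0` forces `p = s`, i.e. `q = 2p + m - 1`. Every other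
value of `r < p` is excluded: `r ≥ 0` by the same injectivity, and `-m < r ≤ 0` because the
right-hand side then has a zero factor.
-/

open Finset

section RisingProduct

variable {R : Type*} [CommRing R] [LinearOrder R] [IsStrictOrderedRing R]

theorem prod_range_add_strictMonoOn {m : ℕ} (hm : m ≠ 0) :
    StrictMonoOn (fun a : R => ∏ i ∈ range m, (a + i)) (Set.Ici 0) := by
  intro a (ha : 0 ≤ a) b (hb : 0 ≤ b) hab
  obtain ⟨k, rfl⟩ := Nat.exists_eq_succ_of_ne_zero hm
  simp only [prod_range_succ', Nat.cast_zero, add_zero]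
  have hle : ∏ i ∈ range k, (a + (i + 1 : ℕ)) ≤ ∏ i ∈ range k, (b + (i + 1 : ℕ)) :=
    prod_le_prod (fun i _ => by positivity) fun i _ => by gcongr
  exact mul_lt_mul_of_le_of_lt_of_nonneg_of_pos hle hab ha (prod_pos fun i _ => by positivity)

theorem prod_range_add_injOn {m : ℕ} (hm : m ≠ 0) :
    Set.InjOn (fun a : R => ∏ i ∈ range m, (a + i)) (Set.Ici 0) :=
  (prod_range_add_strictMonoOn hm).injOn

end RisingProduct

theorem prod_range_add_eq_neg_one_pow_mul {R : Type*} [CommRing R] (a : R) (m : ℕ) :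
    ∏ i ∈ range m, (a + i) = (-1) ^ m * ∏ i ∈ range m, (1 - m - a + i) := by
  rw [← prod_range_reflect (fun i : ℕ => 1 - m - a + i), ← card_range m, ← prod_const,
    card_range, ← prod_mul_distrib]
  refine prod_congr rfl fun i hi => ?_
  have hi : i < m := mem_range.1 hi
  rw [Nat.cast_sub (by omega), Nat.cast_sub (by omega)]
  push_cast
  ring

theorem prod_range_add_eq_zero {m : ℕ} {a : ℤ} (h₁ : -m < a) (h₂ : a ≤ 0) :
    ∏ i ∈ range m, (a + i) = 0 :=
  prod_eq_zero (i := a.natAbs) (mem_range.2 (by omega)) (by omega)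

theorem rising_factorial_eq_forces_even (m p q : ℕ) (hm : 2 ≤ m) (hp : 0 < p) (hq : 0 < q)
    (h : ∏ i ∈ Finset.range m, ((p : ℤ) + i) = ∏ i ∈ Finset.range m, ((p : ℤ) - q + i)) :
    Even m ∧ (q : ℤ) = 2 * p + m - 1 := by
  have hm₀ : m ≠ 0 := by omega
  set r : ℤ := p - q
  have hpos : 0 < ∏ i ∈ range m, ((p : ℤ) + i) := prod_pos fun i _ => by positivity
  have hr : r + m ≤ 0 := by
    by_contra! hr
    rcases le_or_gt r 0 with hr₀ | hr₀
    · exact hpos.ne' (h.trans (prod_range_add_eq_zero (by omega) hr₀))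
    · exact (prod_range_add_strictMonoOn hm₀ hr₀.le (Nat.cast_nonneg p) (by omega)).ne h.symm
  rw [prod_range_add_eq_neg_one_pow_mul r m] at h
  set s : ℤ := 1 - m - r
  have hs : 0 < s := by omega
  have hS : 0 < ∏ i ∈ range m, (s + i) := prod_pos fun i _ => by positivity
  have heven : Even m := by
    by_contra hodd
    rw [Nat.not_even_iff_odd.1 hodd |>.neg_one_pow] at h
    linarith
  rw [heven.neg_one_pow, one_mul] at h
  have hps : (p : ℤ) = s := prod_range_add_injOn hm₀ (Nat.cast_nonneg p) hs.le h
  exact ⟨heven, by omega⟩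
end

section
/- Let f be a meromorphic function on ℂ, let α, β be nonzero complex numbers, let p ≥ 1, q ≥ 1 be integers, and suppose near 0 we have f(z) = α z^{−p}(1 + o(1)) and V(z) = β z^{q}(1 + o(1)) with f and V meromorphic. If m ≥ 2 is an integer and (fV)^{(m)} − f^{(m)}V vanishes identically near 0, then the coefficient identity p(p+1)⋯(p+m−1) = (p−q)(p−q+1)⋯(p−q+m−1) holds, where the right-hand side is interpreted as the falling product (−p+q)(−p+q−1)⋯(−p+q−m+1) up to sign. -/
/-!
Near `0` write `f = z^{-p} (α h)` and `fV = z^{q-p} (αβ h k)` with `h, k` analytic and `h 0 = k 0 = 1`.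
Differentiating `z^n A(z)` with `A` analytic `m` times gives `z^{n-m} B(z)` with `B` analytic and
`B 0 = n(n-1)⋯(n-m+1) A 0`. Both sides of `(fV)^{(m)} = f^{(m)} V` are therefore `z^{q-p-m}` times a
function analytic at `0`, and comparing these at `0` gives
`(q-p)(q-p-1)⋯(q-p-m+1) αβ = (-p)(-p-1)⋯(-p-m+1) αβ`; cancelling `αβ` and the sign `(-1)^m` gives the
claim.
-/

open Filter Finset Topology

section Laurent

variable {𝕜 : Type*} [NontriviallyNormedField 𝕜]

theorem deriv_zpow_mul {B : 𝕜 → 𝕜} {z : 𝕜} (hz : z ≠ 0) (hB : DifferentiableAt 𝕜 B z) (k : ℤ) :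
    deriv (fun w => w ^ k * B w) z = z ^ (k - 1) * (k * B z + z * deriv B z) := by
  rw [((hasDerivAt_zpow k z (Or.inl hz)).fun_mul hB.hasDerivAt).deriv]
  nth_rw 3 [show k = (k - 1) + 1 by ring]
  rw [zpow_add_one₀ hz]
  ring

theorem eq_at_zero_of_zpow_mul_eventuallyEq {B C : 𝕜 → 𝕜} (hB : ContinuousAt B 0)
    (hC : ContinuousAt C 0) {n : ℤ} (h : ∀ᶠ z in 𝓝[≠] 0, z ^ n * B z = z ^ n * C z) :
    B 0 = C 0 := by
  have hBC : B =ᶠ[𝓝[≠] 0] C := by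
    filter_upwards [h, self_mem_nhdsWithin] with z hz hz0
    exact mul_left_cancel₀ (zpow_ne_zero n hz0) hz
  exact tendsto_nhds_unique (hB.continuousWithinAt.tendsto.congr' hBC) hC.continuousWithinAt

theorem exists_iteratedDeriv_eventuallyEq_zpow_mul [CompleteSpace 𝕜] {f A : 𝕜 → 𝕜} {n : ℤ}
    (hA : AnalyticAt 𝕜 A 0) (hf : f =ᶠ[𝓝[≠] 0] fun z => z ^ n * A z) (m : ℕ) :
    ∃ B : 𝕜 → 𝕜, AnalyticAt 𝕜 B 0 ∧ B 0 = (∏ i ∈ range m, ((n : 𝕜) - i)) * A 0 ∧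
      iteratedDeriv m f =ᶠ[𝓝[≠] 0] fun z => z ^ (n - m) * B z := by
  induction m with
  | zero => exact ⟨A, hA, by simp, by simpa using hf⟩
  | succ m ih =>
    obtain ⟨B, hB, hB0, hfB⟩ := ih
    refine ⟨fun z => ((n : 𝕜) - m) * B z + z * deriv B z, by fun_prop, ?_, ?_⟩
    · simp only [hB0, zero_mul, add_zero, prod_range_succ]
      ring
    · have hdiff : ∀ᶠ z in 𝓝[≠] 0, DifferentiableAt 𝕜 B z :=
        (hB.eventually_analyticAt.mono fun z hz => hz.differentiableAt).filter_mono
          nhdsWithin_le_nhds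
      rw [iteratedDeriv_succ]
      filter_upwards [hfB.nhdsNE_deriv, hdiff, self_mem_nhdsWithin] with z hz hBz hz0
      rw [hz, deriv_zpow_mul hz0 hBz]
      push_cast [sub_sub]
      rfl

end Laurent

theorem prod_range_neg_sub {R : Type*} [CommRing R] (x : R) (m : ℕ) :
    ∏ i ∈ range m, (-x - i) = (-1) ^ m * ∏ i ∈ range m, (x + i) := by
  calc ∏ i ∈ range m, (-x - i) = ∏ i ∈ range m, -(x + i) := prod_congr rfl fun i _ => by ring
    _ = (-1) ^ m * ∏ i ∈ range m, (x + i) := by rw [prod_neg, card_range]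

theorem laurent_coefficient_extraction_general (m p q : ℕ)
    (α β : ℂ) (hα : α ≠ 0) (hβ : β ≠ 0) (f V h k : ℂ → ℂ)
    (hh : AnalyticAt ℂ h 0) (hk : AnalyticAt ℂ k 0) (hh0 : h 0 = 1) (hk0 : k 0 = 1)
    (hf : ∀ᶠ z in nhdsWithin 0 {(0 : ℂ)}ᶜ, f z = α * z ^ (-(p : ℤ)) * h z)
    (hV : ∀ᶠ z in nhdsWithin 0 {(0 : ℂ)}ᶜ, V z = β * z ^ (q : ℤ) * k z)
    (hU : ∀ᶠ z in nhdsWithin 0 {(0 : ℂ)}ᶜ,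
      iteratedDeriv m (fun w => f w * V w) z - iteratedDeriv m f z * V z = 0) :
    ∏ i ∈ Finset.range m, ((p : ℤ) + i) = ∏ i ∈ Finset.range m, ((p : ℤ) - q + i) := by
  have hf' : f =ᶠ[𝓝[≠] 0] fun z => z ^ (-(p : ℤ)) * (α * h z) :=
    hf.mono fun z hz => by rw [hz]; ring
  have hfV : (fun w => f w * V w) =ᶠ[𝓝[≠] 0] fun z => z ^ ((q : ℤ) - p) * (α * β * (h z * k z)) := by
    filter_upwards [hf, hV, self_mem_nhdsWithin] with z hfz hVz hz0
    rw [hfz, hVz, sub_eq_neg_add, zpow_add₀ hz0]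
    ring
  obtain ⟨B₁, hB₁, hB₁0, hfVB⟩ := exists_iteratedDeriv_eventuallyEq_zpow_mul (by fun_prop) hfV m
  obtain ⟨B₂, hB₂, hB₂0, hfB⟩ := exists_iteratedDeriv_eventuallyEq_zpow_mul (by fun_prop) hf' m
  have hB : B₁ 0 = β * (B₂ 0 * k 0) := by
    refine eq_at_zero_of_zpow_mul_eventuallyEq (n := q - p - m)
      (C := fun z => β * (B₂ z * k z)) hB₁.continuousAt (by fun_prop) ?_
    filter_upwards [hU, hfVB, hfB, hV, self_mem_nhdsWithin] with z hUz hfVz hfz hVz hz0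
    rw [sub_eq_zero, hfVz, hfz, hVz] at hUz
    rw [hUz, show (q : ℤ) - p - m = -p - m + q by ring, zpow_add₀ hz0]
    ring
  rw [hB₁0, hB₂0, hh0, hk0] at hB
  have hprod : ∏ i ∈ range m, (-((p : ℂ) - q) - i) = ∏ i ∈ range m, (-(p : ℂ) - i) := by
    apply mul_right_cancel₀ (mul_ne_zero hα hβ)
    push_cast at hB
    simp only [neg_sub]
    linear_combination hB
  rw [prod_range_neg_sub, prod_range_neg_sub] at hprod
  exact_mod_cast (mul_left_cancel₀ (pow_ne_zero m (neg_ne_zero.mpr one_ne_zero)) hprod).symm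

theorem laurent_coefficient_extraction (m p q : ℕ) (hm : 2 ≤ m) (hp : 1 ≤ p) (hq : 1 ≤ q)
    (α β : ℂ) (hα : α ≠ 0) (hβ : β ≠ 0) (f V h k : ℂ → ℂ)
    (hh : AnalyticAt ℂ h 0) (hk : AnalyticAt ℂ k 0) (hh0 : h 0 = 1) (hk0 : k 0 = 1)
    (hf : ∀ᶠ z in nhdsWithin 0 {(0 : ℂ)}ᶜ, f z = α * z ^ (-(p : ℤ)) * h z)
    (hV : ∀ᶠ z in nhdsWithin 0 {(0 : ℂ)}ᶜ, V z = β * z ^ (q : ℤ) * k z)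
    (hU : ∀ᶠ z in nhdsWithin 0 {(0 : ℂ)}ᶜ,
      iteratedDeriv m (fun w => f w * V w) z - iteratedDeriv m f z * V z = 0) :
    ∏ i ∈ Finset.range m, ((p : ℤ) + i) = ∏ i ∈ Finset.range m, ((p : ℤ) - q + i) :=
  laurent_coefficient_extraction_general m p q α β hα hβ f V h k hh hk hh0 hk0 hf hV hU
end

section
/- Let f(z) = ((λe^{az+b} − 1)/(e^{az+b} − 1))^n with n ≥ 2, a ≠ 0, λ^n = 1, λ ≠ 1. Then at each pole z₀ of f (i.e., where e^{az₀+b} = 1), the residue of f is zero. -/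
/-!
The integrand is `P(1/z) / (1 + z)` for the polynomial `P(w) = (D + (D - E) w)^n`. For every
polynomial `P` and `0 < r < 1`, `∮_{|z|=r} P(1/z) / (1 + z) dz = 2πi (P(0) - P(-1))`: minus the
residues at `∞` and at `-1`. On monomials this follows by induction from the partial fraction
`z^{-(m+1)} / (1 + z) = z^{-(m+1)} - z^{-m} / (1 + z)`. Here `P(0) = D^n` and `P(-1) = E^n`.
-/

open Complex Metric Real Polynomial

theorem one_add_ne_zero_of_norm_lt_one {z : ℂ} (hz : ‖z‖ < 1) : 1 + z ≠ 0 := by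
  intro h
  simp [eq_neg_of_add_eq_zero_right h] at hz

section

variable {r : ℝ}

theorem continuousOn_inv_sphere_zero (hr0 : 0 < r) :
    ContinuousOn (fun z : ℂ => z⁻¹) (sphere 0 r) :=
  continuousOn_inv₀.mono fun _ hz => ne_zero_of_mem_sphere hr0.ne' ⟨_, hz⟩

theorem ContinuousOn.div_one_add_sphere_zero {f : ℂ → ℂ} (hf : ContinuousOn f (sphere 0 r))
    (hr1 : r < 1) : ContinuousOn (fun z => f z / (1 + z)) (sphere 0 r) :=
  hf.div (continuousOn_const.add continuousOn_id) fun _ hz =>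
    one_add_ne_zero_of_norm_lt_one ((mem_sphere_zero_iff_norm.mp hz).trans_lt hr1)

theorem circleIntegral_inv_pow_succ (hr0 : 0 < r) (m : ℕ) :
    (∮ z in C(0, r), z⁻¹ ^ (m + 1)) = 2 * π * I * 0 ^ m := by
  cases m with
  | zero =>
    simpa using circleIntegral.integral_sub_inv_of_mem_ball (mem_ball_self (x := (0 : ℂ)) hr0)
  | succ m =>
    rw [zero_pow m.succ_ne_zero, mul_zero]
    simpa only [sub_zero, zpow_neg, zpow_natCast, inv_pow] using
      circleIntegral.integral_sub_zpow_of_ne (n := -(m + 2 : ℕ)) (by omega) 0 0 r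

theorem circleIntegral_inv_one_add (hr0 : 0 < r) (hr1 : r < 1) :
    (∮ z in C(0, r), (1 + z)⁻¹) = 0 := by
  refine DiffContOnCl.circleIntegral_eq_zero hr0.le (DifferentiableOn.diffContOnCl ?_)
  rw [closure_ball 0 hr0.ne']
  intro z hz
  exact ((differentiableAt_id.const_add 1).inv (one_add_ne_zero_of_norm_lt_one
    ((mem_closedBall_zero_iff.mp hz).trans_lt hr1))).differentiableWithinAt

theorem circleIntegral_inv_pow_div_one_add (hr0 : 0 < r) (hr1 : r < 1) (m : ℕ) :
    (∮ z in C(0, r), z⁻¹ ^ m / (1 + z)) = 2 * π * I * (0 ^ m - (-1) ^ m) := by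
  induction m with
  | zero => simpa using circleIntegral_inv_one_add hr0 hr1
  | succ m ih =>
    have hsplit : Set.EqOn (fun z : ℂ => z⁻¹ ^ (m + 1) / (1 + z))
        (fun z => z⁻¹ ^ (m + 1) - z⁻¹ ^ m / (1 + z)) (sphere 0 r) := by
      intro z hz
      rw [mem_sphere_zero_iff_norm] at hz
      have hz0 : z ≠ 0 := norm_pos_iff.mp (hz ▸ hr0)
      have hz1 : 1 + z ≠ 0 := one_add_ne_zero_of_norm_lt_one (hz ▸ hr1)
      simp only [inv_pow]
      field_simp
      ring
    have hpow (k : ℕ) : ContinuousOn (fun z : ℂ => z⁻¹ ^ k) (sphere 0 r) :=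
      (continuousOn_inv_sphere_zero hr0).pow k
    rw [circleIntegral.integral_congr hr0.le hsplit,
      circleIntegral.integral_sub ((hpow _).circleIntegrable hr0.le)
        (((hpow _).div_one_add_sphere_zero hr1).circleIntegrable hr0.le),
      ih, circleIntegral_inv_pow_succ hr0]
    ring

theorem circleIntegral_eval_inv_div_one_add (hr0 : 0 < r) (hr1 : r < 1) (P : ℂ[X]) :
    (∮ z in C(0, r), P.eval z⁻¹ / (1 + z)) = 2 * π * I * (P.eval 0 - P.eval (-1)) := by
  induction P using Polynomial.induction_on' with
  | add P Q hP hQ =>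
    have hcont (R : ℂ[X]) : CircleIntegrable (fun z => R.eval z⁻¹ / (1 + z)) 0 r :=
      ((R.continuous.comp_continuousOn (continuousOn_inv_sphere_zero hr0)).div_one_add_sphere_zero
        hr1).circleIntegrable hr0.le
    simp only [eval_add, add_div]
    rw [circleIntegral.integral_add (hcont P) (hcont Q), hP, hQ]
    ring
  | monomial m a =>
    simp only [eval_monomial, mul_div_assoc, circleIntegral.integral_const_mul,
      circleIntegral_inv_pow_div_one_add hr0 hr1]
    ring

end

theorem residue_vanishes_of_pow_eq_general (n : ℕ) (D E : ℂ) (h : D ^ n = E ^ n)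
    (r : ℝ) (hr0 : 0 < r) (hr1 : r < 1) :
    (∮ z in C(0, r), (D + (D - E) / z) ^ n / (1 + z)) = 0 := by
  have hP : ∀ z : ℂ, (D + (D - E) / z) ^ n = ((C D + C (D - E) * X) ^ n).eval z⁻¹ := by
    intro z
    simp [div_eq_mul_inv]
  calc (∮ z in C(0, r), (D + (D - E) / z) ^ n / (1 + z))
      = 2 * π * I * (D ^ n - E ^ n) := by
        simp only [hP, circleIntegral_eval_inv_div_one_add hr0 hr1]
        simp
    _ = 0 := by rw [h, sub_self, mul_zero]

theorem residue_vanishes_of_pow_eq (n : ℕ) (hn : 2 ≤ n) (D E : ℂ) (h : D ^ n = E ^ n)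
    (r : ℝ) (hr0 : 0 < r) (hr1 : r < 1) :
    (∮ z in C(0, r), (D + (D - E) / z) ^ n / (1 + z)) = 0 :=
  residue_vanishes_of_pow_eq_general n D E h r hr0 hr1
end

section
/- Let λ be a primitive or non-trivial n-th root of unity (λ^n = 1, λ ≠ 1) with n ≥ 2, and define σ(w) = log((1−w)/(1−λw)) near w = 0. Then the coefficient a_{n−1} of w^{n−1} in the power series of τ(w) = σ(w)σ'(w) equals ∑_{j=1}^{n−1} (1/(n−j))(λ^{n−j} − 1)(λ^{j} − 1), and this coefficient is nonzero. -/
/-!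
The coefficient is a Cauchy product, in which the index `0` of the first factor contributes
nothing. Since `|λ| = 1`, `λ ^ (n - j)` is the conjugate of `λ ^ j`, so the `j`-th term is the
nonnegative real `|λ ^ j - 1| ^ 2 / (n - j)`, and the term `j = 1` is positive because `λ ≠ 1`.
-/

open Finset ComplexConjugate

theorem PowerSeries.coeff_mk_mul_mk_of_apply_zero {R : Type*} [CommSemiring R] {a : ℕ → R}
    (ha : a 0 = 0) (b : ℕ → R) (m : ℕ) :
    coeff m (mk a * mk b) = ∑ j ∈ Icc 1 m, a (m + 1 - j) * b (j - 1) := by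
  rw [coeff_mul,
    Nat.sum_antidiagonal_eq_sum_range_succ (fun i k => coeff i (mk a) * coeff k (mk b)),
    sum_range_succ', ← sum_range_reflect, ← Ico_add_one_right_eq_Icc, sum_Ico_eq_sum_range]
  simp only [coeff_mk, ha, zero_mul, add_zero, Nat.add_sub_cancel]
  refine sum_congr rfl fun i hi => ?_
  rw [mem_range] at hi
  congr 2 <;> omega

theorem Complex.pow_sub_eq_conj_pow {ζ : ℂ} {n : ℕ} (hζ : ζ ^ n = 1) (hn : n ≠ 0) {j : ℕ}
    (hj : j ≤ n) : ζ ^ (n - j) = conj (ζ ^ j) := by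
  have hζ0 : ζ ≠ 0 := by rintro rfl; simp [hn] at hζ
  rw [pow_sub₀ ζ hζ0 hj, hζ, one_mul, Complex.inv_eq_conj]
  rw [norm_pow, Complex.norm_eq_one_of_pow_eq_one hζ hn, one_pow]

theorem Complex.pow_sub_sub_one_mul_pow_sub_one {ζ : ℂ} {n : ℕ} (hζ : ζ ^ n = 1) (hn : n ≠ 0)
    {j : ℕ} (hj : j ≤ n) : (ζ ^ (n - j) - 1) * (ζ ^ j - 1) = normSq (ζ ^ j - 1) := by
  rw [pow_sub_eq_conj_pow hζ hn hj, normSq_eq_conj_mul_self, map_sub, map_one]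

theorem Complex.sum_one_div_mul_pow_sub_one_mul_pow_sub_one_ne_zero {ζ : ℂ} {n : ℕ}
    (hζ : ζ ^ n = 1) (hζ1 : ζ ≠ 1) (hn : 2 ≤ n) :
    ∑ j ∈ Icc 1 (n - 1), (1 / ((n : ℂ) - j)) * (ζ ^ (n - j) - 1) * (ζ ^ j - 1) ≠ 0 := by
  have hterm : ∀ j ∈ Icc 1 (n - 1), (1 / ((n : ℂ) - j)) * (ζ ^ (n - j) - 1) * (ζ ^ j - 1)
      = ((1 / ((n : ℝ) - j) * normSq (ζ ^ j - 1) : ℝ) : ℂ) := by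
    intro j hj
    rw [mul_assoc, pow_sub_sub_one_mul_pow_sub_one hζ (by omega) (by grind)]
    push_cast
    rfl
  rw [sum_congr rfl hterm, ← ofReal_sum, ofReal_ne_zero]
  refine (sum_pos' (fun j hj => ?_) ⟨1, mem_Icc.mpr ⟨le_rfl, by omega⟩, ?_⟩).ne'
  · have : (j : ℝ) < n := by exact_mod_cast (by grind : j < n)
    have := normSq_nonneg (ζ ^ j - 1)
    positivity
  · have : ((1 : ℕ) : ℝ) < n := by exact_mod_cast hn
    have : 0 < normSq (ζ ^ 1 - 1) := normSq_pos.mpr (by simpa [sub_eq_zero] using hζ1)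
    positivity

theorem sigma_product_coefficient (n : ℕ) (hn : 2 ≤ n) (lam : ℂ)
    (hl : lam ^ n = 1) (hne : lam ≠ 1) :
    (PowerSeries.coeff (R := ℂ) (n - 1))
        ((PowerSeries.mk fun m => if m = 0 then 0 else (lam ^ m - 1) / m) *
          (PowerSeries.mk fun m => lam ^ (m + 1) - 1))
      = ∑ j ∈ Finset.Icc 1 (n - 1), (1 / ((n : ℂ) - j)) * (lam ^ (n - j) - 1) * (lam ^ j - 1)
    ∧ (PowerSeries.coeff (R := ℂ) (n - 1))
        ((PowerSeries.mk fun m => if m = 0 then 0 else (lam ^ m - 1) / m) *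
          (PowerSeries.mk fun m => lam ^ (m + 1) - 1)) ≠ 0 := by
  have hcoeff : (PowerSeries.coeff (R := ℂ) (n - 1))
        ((PowerSeries.mk fun m => if m = 0 then 0 else (lam ^ m - 1) / m) *
          (PowerSeries.mk fun m => lam ^ (m + 1) - 1))
      = ∑ j ∈ Finset.Icc 1 (n - 1), (1 / ((n : ℂ) - j)) * (lam ^ (n - j) - 1) * (lam ^ j - 1) := by
    rw [PowerSeries.coeff_mk_mul_mk_of_apply_zero (by simp), Nat.sub_add_cancel (by omega)]
    refine sum_congr rfl fun j hj => ?_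
    rw [mem_Icc] at hj
    rw [if_neg (by omega), Nat.sub_add_cancel hj.1, Nat.cast_sub (by omega : j ≤ n)]
    ring
  exact ⟨hcoeff, hcoeff ▸ Complex.sum_one_div_mul_pow_sub_one_mul_pow_sub_one_ne_zero hl hne hn⟩
end
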